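/- Let G be a countable group and H a strongly self-commensurating subgroup with Kazhdan's property (T). Then H has the spectral gap property: the representation of H on ℓ²(G/H ∖ {H}) does not weakly contain 1_H. -/

import Mathlib

open scoped Classical ENNReal
open Topology Filter

noncomputable section

namespace QR

/-- The evaluation of a unitary representation on an element of the group algebra `ℂ[G]`. -/
def repAlg {G : Type*} [Group G] {E : Type*} [NormedAddCommGroup E] [NormedSpace ℂ E]
    (π : G →* (E →L[ℂ] E)) (f : MonoidAlgebra ℂ G) : E →L[ℂ] E :=
  MonoidAlgebra.lift ℂ (E →L[ℂ] E) G π f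

/-- Weak containment `ρ ≺ π` of representations: `‖ρ(f)‖ ≤ ‖π(f)‖` for every element `f` of
the group algebra `ℂ[G]`. -/
def WeaklyContained {G : Type*} [Group G] {E F : Type*}
    [NormedAddCommGroup E] [NormedSpace ℂ E] [NormedAddCommGroup F] [NormedSpace ℂ F]
    (ρ : G →* (E →L[ℂ] E)) (π : G →* (F →L[ℂ] F)) : Prop :=
  ∀ f : MonoidAlgebra ℂ G, ‖repAlg ρ f‖ ≤ ‖repAlg π f‖

/-- The trivial (one-dimensional) representation `1_G`. -/
def trivialRep (G : Type*) [Group G] : G →* (ℂ →L[ℂ] ℂ) := 1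

section lp

variable {X K : Type*} [NormedAddCommGroup K] [InnerProductSpace ℂ K]

lemma memTwist (e : X ≃ X) (U : X → (K ≃ₗᵢ[ℂ] K)) (F : lp (fun _ : X => K) 2) :
    Memℓp (fun x => U x (F (e.symm x))) 2 := by
  apply memℓp_gen
  have hs : Summable fun x : X => ‖F x‖ ^ (2 : ℝ≥0∞).toReal :=
    (lp.memℓp F).summable (by norm_num)
  have : Summable fun x : X => ‖F (e.symm x)‖ ^ (2 : ℝ≥0∞).toReal :=
    (e.symm.summable_iff (f := fun x : X => ‖F x‖ ^ (2 : ℝ≥0∞).toReal)).2 hs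
  simpa [LinearIsometryEquiv.norm_map] using this

/-- The twisted translation operator on `ℓ²(X, K)`. -/
def twistOp (e : X ≃ X) (U : X → (K ≃ₗᵢ[ℂ] K)) :
    lp (fun _ : X => K) 2 →L[ℂ] lp (fun _ : X => K) 2 :=
  LinearMap.mkContinuous
    { toFun := fun F => ⟨fun x => U x (F (e.symm x)), memTwist e U F⟩
      map_add' := by
        intro F G'
        apply lp.ext
        funext x
        simp [lp.coeFn_add, Pi.add_apply]
        rfl
      map_smul' := by
        intro c F
        apply lp.ext
        funext x
        simp [lp.coeFn_smul, Pi.smul_apply] }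
    1
    (by
      intro F
      have h2 : (0:ℝ) < (2 : ℝ≥0∞).toReal := by norm_num
      rw [one_mul]
      apply le_of_eq
      rw [lp.norm_eq_tsum_rpow h2, lp.norm_eq_tsum_rpow h2]
      congr 1
      have := (e.symm).tsum_eq (f := fun x : X => ‖F x‖ ^ (2 : ℝ≥0∞).toReal)
      simpa [LinearIsometryEquiv.norm_map] using this)

@[simp] lemma twistOp_apply (e : X ≃ X) (U : X → (K ≃ₗᵢ[ℂ] K))
    (F : lp (fun _ : X => K) 2) (x : X) :
    (twistOp e U F : ∀ _ : X, K) x = U x (F (e.symm x)) := rfl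

end lp

/-- The permutation (unitary) representation of `Γ` on `ℓ²(X)` attached to an action of `Γ`
on the set `X`, given by `(π(g)F)(x) = F(g⁻¹ • x)`. -/
def permRep (Γ X : Type*) [Group Γ] [MulAction Γ X] :
    Γ →* (lp (fun _ : X => ℂ) 2 →L[ℂ] lp (fun _ : X => ℂ) 2) where
  toFun g := twistOp (MulAction.toPerm g) (fun _ => LinearIsometryEquiv.refl ℂ ℂ)
  map_one' := by
    apply ContinuousLinearMap.ext
    intro F
    apply lp.ext
    funext x
    simp
  map_mul' := by
    intro g g'
    apply ContinuousLinearMap.ext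
    intro F
    apply lp.ext
    funext x
    simp [mul_smul]

/-- The left regular representation `λ_G` of `G` on `ℓ²(G)`. -/
def regularRep (G : Type*) [Group G] :
    G →* (lp (fun _ : G => ℂ) 2 →L[ℂ] lp (fun _ : G => ℂ) 2) :=
  permRep G G

/-- The quasi-regular representation `λ_{G/H}` of `G` on `ℓ²(G/H)`. -/
def quasiRegRep (G : Type*) [Group G] (H : Subgroup G) :
    G →* (lp (fun _ : G ⧸ H => ℂ) 2 →L[ℂ] lp (fun _ : G ⧸ H => ℂ) 2) :=
  permRep G (G ⧸ H)

/-- The embedding of `Sub(G)` into `{0,1}^G` by characteristic functions. -/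
def chabautyEmbed (G : Type*) [Group G] : Subgroup G → (G → Bool) :=
  fun H g => decide (g ∈ H)

/-- The Chabauty topology on the space of subgroups of a discrete group `G`: the topology
induced from the product topology on `{0,1}^G` via characteristic functions. -/
def chabautyTopology (G : Type*) [Group G] : TopologicalSpace (Subgroup G) :=
  TopologicalSpace.induced (chabautyEmbed G) inferInstance

/-- The conjugate subgroup `gHg⁻¹`. -/
def conjSubgroup {G : Type*} [Group G] (g : G) (H : Subgroup G) : Subgroup G :=
  Subgroup.map (MulAut.conj g).toMonoidHom H

/-- The conjugacy class of a subgroup, as a subset of `Sub(G)`. -/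
def conjClass {G : Type*} [Group G] (H : Subgroup G) : Set (Subgroup G) :=
  {K | ∃ g : G, conjSubgroup g H = K}

section SpectralGap

variable {G : Type*} [Group G]

lemma base_fixed {H : Subgroup G} (h : H) :
    (h : G) • ((1 : G) : G ⧸ H) = ((1 : G) : G ⧸ H) := by
  rw [MulAction.Quotient.smul_mk, smul_eq_mul, mul_one]
  exact QuotientGroup.eq.mpr (by simp [H.inv_mem h.2])

/-- The action of `H` on `G/H ∖ {H}`. -/
instance sgAction (G : Type*) [Group G] (H : Subgroup G) :
    MulAction H {q : G ⧸ H // q ≠ ((1 : G) : G ⧸ H)} where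
  smul h q := ⟨(h : G) • q.1, fun hEq => q.2 (by
    calc q.1 = (h : G)⁻¹ • ((h : G) • q.1) := (inv_smul_smul _ _).symm
      _ = ((h⁻¹ : H) : G) • (((1 : G) : G ⧸ H)) := by rw [hEq]; rfl
      _ = ((1 : G) : G ⧸ H) := base_fixed _)⟩
  one_smul q := by
    apply Subtype.ext
    show ((1 : H) : G) • q.1 = q.1
    simp
  mul_smul h h' q := by
    apply Subtype.ext
    show ((h * h' : H) : G) • q.1 = (h : G) • ((h' : G) • q.1)
    rw [MulMemClass.coe_mul, mul_smul]

/-- The natural representation of `H` on `ℓ²(G/H ∖ {H})`. -/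
def sgRep (G : Type*) [Group G] (H : Subgroup G) :
    H →* (lp (fun _ : {q : G ⧸ H // q ≠ ((1 : G) : G ⧸ H)} => ℂ) 2 →L[ℂ]
      lp (fun _ : {q : G ⧸ H // q ≠ ((1 : G) : G ⧸ H)} => ℂ) 2) :=
  permRep H {q : G ⧸ H // q ≠ ((1 : G) : G ⧸ H)}

/-- `H ≤ G` has the spectral gap property if `1_H` is not weakly contained in the natural
representation of `H` on `ℓ²(G/H ∖ {H})`. -/
def HasSpectralGap (G : Type*) [Group G] (H : Subgroup G) : Prop :=
  ¬ WeaklyContained (trivialRep H) (sgRep G H)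

end SpectralGap

universe uT

/-- Kazhdan's property (T): every unitary representation with almost invariant vectors has
a nonzero invariant vector. -/
def HasPropertyT (Γ : Type*) [Group Γ] : Prop :=
  ∀ (E : Type uT) [NormedAddCommGroup E] [InnerProductSpace ℂ E] [CompleteSpace E]
    (π : Γ →* (E →L[ℂ] E)), (∀ (g : Γ) (v : E), ‖π g v‖ = ‖v‖) →
    (∀ (F : Finset Γ) (ε : ℝ), 0 < ε →
      ∃ v : E, ‖v‖ = 1 ∧ ∀ g ∈ F, ‖π g v - v‖ < ε) →
    ∃ v : E, v ≠ 0 ∧ ∀ g : Γ, π g v = v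

/-!
If `1_H` were weakly contained in the representation of `H` on `ℓ²(G/H ∖ {H})`, testing the
weak containment on `∑_{g ∈ F} δ_g` would produce almost invariant unit vectors, so property (T)
gives a nonzero invariant vector `ξ`. An invariant `ℓ²` function is constant on orbits and has
only finitely many coordinates of modulus at least `|ξ(x)| > 0`, so the orbit of some `sH ≠ H` is
finite. But the stabilizer of `sH` in `H` is `H ∩ sHs⁻¹`, which has infinite index in `H`.
-/

section Norms

variable {ι E : Type*} [NormedAddCommGroup E]

lemma norm_sum_add_two_le {w : ι → E} {s : Finset ι} (hw : ∀ i ∈ s, ‖w i‖ ≤ 1) {a b : ι}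
    (ha : a ∈ s) (hb : b ∈ s) (hab : a ≠ b) :
    ‖∑ i ∈ s, w i‖ + 2 ≤ ‖w a + w b‖ + s.card := by
  have hpair : {a, b} ⊆ s := Finset.insert_subset ha (Finset.singleton_subset_iff.2 hb)
  have hcard : ((s \ {a, b}).card : ℝ) + 2 = s.card := by
    have hle := Finset.card_le_card hpair
    rw [Finset.card_pair hab] at hle
    rw [Finset.card_sdiff_of_subset hpair, Finset.card_pair hab]
    push_cast [hle]
    ring
  have hrest : ‖∑ i ∈ s \ {a, b}, w i‖ ≤ (s \ {a, b}).card := by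
    simpa using norm_sum_le_of_le (s \ {a, b}) fun i hi => hw i (Finset.mem_sdiff.1 hi).1
  calc ‖∑ i ∈ s, w i‖ + 2 = ‖∑ i ∈ s \ {a, b}, w i + (w a + w b)‖ + 2 := by
        rw [← Finset.sum_pair hab, Finset.sum_sdiff hpair]
    _ ≤ ‖w a + w b‖ + s.card := by linarith [norm_add_le (∑ i ∈ s \ {a, b}, w i) (w a + w b)]

lemma norm_sub_sq_le_of_norm_eq_one {𝕜 : Type*} [RCLike 𝕜] [InnerProductSpace 𝕜 E] {x y : E}
    (hx : ‖x‖ = 1) (hy : ‖y‖ = 1) : ‖x - y‖ ^ 2 ≤ 4 * (2 - ‖x + y‖) := by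
  have hpar := parallelogram_law_with_norm 𝕜 x y
  have hle : ‖x + y‖ ≤ 2 := by linarith [norm_add_le x y]
  rw [hx, hy] at hpar
  nlinarith [norm_nonneg (x + y)]

end Norms

section Representations

variable {Γ E : Type*} [Group Γ] [NormedAddCommGroup E]

def HasAlmostInvariantVectors [NormedSpace ℂ E] (π : Γ →* (E →L[ℂ] E)) : Prop :=
  ∀ (F : Finset Γ) (ε : ℝ), 0 < ε → ∃ v : E, ‖v‖ = 1 ∧ ∀ g ∈ F, ‖π g v - v‖ < ε

lemma repAlg_sum_single_one [NormedSpace ℂ E] (π : Γ →* (E →L[ℂ] E)) (s : Finset Γ) :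
    repAlg π (∑ g ∈ s, MonoidAlgebra.single g (1 : ℂ)) = ∑ g ∈ s, π g := by
  simp [repAlg]

lemma norm_repAlg_trivialRep_sum_single_one (s : Finset Γ) :
    ‖repAlg (trivialRep Γ) (∑ g ∈ s, MonoidAlgebra.single g (1 : ℂ))‖ = s.card := by
  have h1 : ∀ g, trivialRep Γ g = 1 := fun _ => rfl
  simp only [repAlg_sum_single_one, h1, Finset.sum_const, ← Nat.cast_smul_eq_nsmul ℂ, norm_smul]
  simp

/-- Weak containment tested on `∑_{g ∈ F ∪ {1}} δ_g` gives a unit vector `u` with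
`‖∑ π g u‖` close to `|F ∪ {1}|`, which forces every `π g u` to be close to `π 1 u = u`. -/
lemma hasAlmostInvariantVectors_of_weaklyContained [InnerProductSpace ℂ E]
    {π : Γ →* (E →L[ℂ] E)} (hπ : ∀ (g : Γ) (v : E), ‖π g v‖ = ‖v‖)
    (h : WeaklyContained (trivialRep Γ) π) : HasAlmostInvariantVectors π := by
  intro F ε hε
  set s := insert 1 F
  have hT : (s.card : ℝ) ≤ ‖∑ g ∈ s, π g‖ := by
    have := h (∑ g ∈ s, MonoidAlgebra.single g (1 : ℂ))
    rwa [norm_repAlg_trivialRep_sum_single_one, repAlg_sum_single_one] at this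
  have hδ : 0 < ε ^ 2 / 8 := by positivity
  obtain ⟨u, hu, hTu⟩ := (∑ g ∈ s, π g).exists_nnnorm_eq_one_lt_apply_of_lt_opNNNorm
    (r := (s.card - ε ^ 2 / 8 : ℝ).toNNReal) (by
      have hs : (0 : ℝ) < s.card := by exact_mod_cast (Finset.insert_nonempty 1 F).card_pos
      rw [← norm_toNNReal, Real.toNNReal_lt_toNNReal_iff (by linarith)]
      linarith)
  have hu : ‖u‖ = 1 := by simpa using congrArg NNReal.toReal hu
  have hTu : s.card - ε ^ 2 / 8 < ‖∑ g ∈ s, π g u‖ := by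
    simpa using (Real.le_coe_toNNReal _).trans_lt (NNReal.coe_lt_coe.2 hTu)
  refine ⟨u, hu, fun g hg => ?_⟩
  rcases eq_or_ne g 1 with rfl | hg1
  · simpa using hε
  have hpair := norm_sum_add_two_le (w := fun g => π g u) (s := s)
    (fun g _ => (hπ g u).trans_le hu.le) (Finset.mem_insert_of_mem hg)
    (Finset.mem_insert_self 1 F) hg1
  simp only [map_one, one_apply_eq_self] at hpair
  have hsq := norm_sub_sq_le_of_norm_eq_one (𝕜 := ℂ) ((hπ g u).trans hu) hu
  exact lt_of_pow_lt_pow_left₀ 2 hε.le (by nlinarith)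

end Representations

lemma lp.finite_setOf_le_norm {α : Type*} {E : α → Type*} [∀ i, NormedAddCommGroup (E i)]
    {p : ℝ≥0∞} (hp : 0 < p.toReal) (f : lp E p) {c : ℝ} (hc : 0 < c) :
    {i | c ≤ ‖f i‖}.Finite := by
  have hsmall := ((lp.memℓp f).summable hp).tendsto_cofinite_zero.eventually_lt_const
    (Real.rpow_pos_of_pos hc p.toReal)
  exact (Filter.eventually_cofinite.1 hsmall).subset fun i hi =>
    not_lt.2 (Real.rpow_le_rpow hc.le hi hp.le)

section PermRep

variable {Γ X : Type*} [Group Γ] [MulAction Γ X]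

lemma permRep_apply (g : Γ) (ξ : lp (fun _ : X => ℂ) 2) (x : X) :
    (permRep Γ X g ξ : ∀ _ : X, ℂ) x = ξ (g⁻¹ • x) := rfl

lemma norm_permRep_apply (g : Γ) (ξ : lp (fun _ : X => ℂ) 2) : ‖permRep Γ X g ξ‖ = ‖ξ‖ := by
  have h2 : (0 : ℝ) < (2 : ℝ≥0∞).toReal := by norm_num
  rw [lp.norm_eq_tsum_rpow h2, lp.norm_eq_tsum_rpow h2]
  exact congrArg (· ^ _) ((MulAction.toPerm g).symm.tsum_eq fun x => ‖ξ x‖ ^ _)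

lemma finite_orbit_of_permRep_fixed {ξ : lp (fun _ : X => ℂ) 2}
    (hξ : ∀ g : Γ, permRep Γ X g ξ = ξ) {x : X} (hx : ξ x ≠ 0) :
    (MulAction.orbit Γ x).Finite := by
  refine (lp.finite_setOf_le_norm (by norm_num) ξ (norm_pos_iff.2 hx)).subset ?_
  rintro _ ⟨g, rfl⟩
  have hconst : ξ (g • x) = ξ x := by
    rw [← inv_inv g, ← permRep_apply, hξ]
  exact (congrArg norm hconst).ge

end PermRep

section PropertyT

def _root_.HilbertBasis.reindex {ι ι' 𝕜 E : Type*} [RCLike 𝕜] [NormedAddCommGroup E]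
    [InnerProductSpace 𝕜 E] [CompleteSpace E] (b : HilbertBasis ι 𝕜 E) (e : ι ≃ ι') :
    HilbertBasis ι' 𝕜 E :=
  HilbertBasis.mk (b.orthonormal.comp _ e.symm.injective) <| by
    rw [e.symm.surjective.range_comp, b.dense_span]

lemma HasPropertyT.exists_fixed_of_linearIsometryEquiv.{v} {Γ E : Type*} [Group Γ]
    [NormedAddCommGroup E] [NormedSpace ℂ E] {E' : Type v} [NormedAddCommGroup E']
    [InnerProductSpace ℂ E'] [CompleteSpace E'] (hT : HasPropertyT.{v} Γ) (Φ : E ≃ₗᵢ[ℂ] E')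
    {π : Γ →* (E →L[ℂ] E)} (hπ : ∀ (g : Γ) (v : E), ‖π g v‖ = ‖v‖)
    (hai : HasAlmostInvariantVectors π) : ∃ v : E, v ≠ 0 ∧ ∀ g : Γ, π g v = v := by
  let π' : Γ →* (E' →L[ℂ] E') :=
    (Φ.toContinuousLinearEquiv.conjContinuousAlgEquiv : (E →L[ℂ] E) →* (E' →L[ℂ] E')).comp π
  have hπ' : ∀ g v, π' g v = Φ (π g (Φ.symm v)) := fun _ _ => rfl
  obtain ⟨v, hv0, hvfix⟩ := hT E' π' (by simp [hπ', hπ]) fun F ε hε => by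
    obtain ⟨v, hv1, hv⟩ := hai F ε hε
    exact ⟨Φ v, by simpa using hv1, fun g hg => by simpa [hπ', ← map_sub] using hv g hg⟩
  refine ⟨Φ.symm v, by simpa using hv0, fun g => Φ.injective ?_⟩
  simpa [hπ'] using hvfix g

/-- `ℓ²(X)` is moved into the universe of `hT` by reindexing along `X ≃ Shrink X`. -/
lemma HasPropertyT.exists_fixed_permRep.{v} {Γ X : Type*} [Group Γ] [MulAction Γ X]
    [Countable X] (hT : HasPropertyT.{v} Γ)
    (hai : HasAlmostInvariantVectors (permRep Γ X)) :
    ∃ ξ : lp (fun _ : X => ℂ) 2, ξ ≠ 0 ∧ ∀ g : Γ, permRep Γ X g ξ = ξ :=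
  hT.exists_fixed_of_linearIsometryEquiv
    ((default : HilbertBasis X ℂ (lp (fun _ : X => ℂ) 2)).reindex (equivShrink.{v} X)).repr
    norm_permRep_apply hai

end PropertyT

section Orbits

variable {G : Type*} [Group G] {H : Subgroup G}

lemma stabilizer_subgroup_quotient_mk (s : G) :
    MulAction.stabilizer H (s : G ⧸ H) = (conjSubgroup s H).subgroupOf H := by
  have hconj := MulAction.stabilizer_smul_eq_stabilizer_map_conj s ((1 : G) : G ⧸ H)
  rw [MulAction.stabilizer_quotient, MulAction.Quotient.smul_mk, smul_eq_mul, mul_one] at hconj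
  rw [conjSubgroup, ← hconj]
  rfl

lemma infinite_orbit_of_relIndex_conjSubgroup_eq_zero
    (hssc : ∀ g : G, g ∉ H → Subgroup.relIndex (conjSubgroup g H) H = 0)
    (x : {q : G ⧸ H // q ≠ ((1 : G) : G ⧸ H)}) : (MulAction.orbit H x).Infinite := by
  obtain ⟨s, hs⟩ := QuotientGroup.mk_surjective x.1
  have hsH : s ∉ H := fun hsH => x.2 <| by
    rw [← hs, QuotientGroup.eq]
    simpa using hsH
  have hstab : MulAction.stabilizer H x = (conjSubgroup s H).subgroupOf H := by
    rw [← stabilizer_subgroup_quotient_mk, hs]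
    ext h
    exact Subtype.ext_iff
  have hcard : (MulAction.orbit H x).ncard = 0 := by
    rw [← MulAction.index_stabilizer, hstab]
    exact hssc s hsH
  intro hfin
  exact (Set.ncard_pos hfin).2 (MulAction.nonempty_orbit x) |>.ne' hcard

end Orbits

/-- A strongly self-commensurating subgroup with Kazhdan's property (T) has
the spectral gap property. -/
theorem spectral_gap_of_propertyT (G : Type*) [Group G] [Countable G] (H : Subgroup G)
    (hT : HasPropertyT H)
    (hssc : ∀ g : G, g ∉ H → Subgroup.relIndex (conjSubgroup g H) H = 0) :
    HasSpectralGap G H := by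
  have : Countable (G ⧸ H) := Quotient.countable
  intro hwc
  obtain ⟨ξ, hξ0, hξfix⟩ := hT.exists_fixed_permRep
    (hasAlmostInvariantVectors_of_weaklyContained norm_permRep_apply hwc)
  obtain ⟨x, hx⟩ : ∃ x, ξ x ≠ 0 := by
    by_contra! hzero
    exact hξ0 (lp.ext (funext hzero))
  exact infinite_orbit_of_relIndex_conjSubgroup_eq_zero hssc x
    (finite_orbit_of_permRep_fixed hξfix hx)

end QR
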